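/- arXiv:math-ph/9904040 — 2 statements merged into one kernel-verified Lean document; each statement's English description precedes it below -/
import Mathlib

section
/- Let m₁ ≥ m₂ ≥ ... ≥ m_M > 0 and n₁ ≥ ... ≥ n_N > 0 be real numbers, S = H^{M+N} for an infinite-dimensional Hilbert space H, and let J⁻¹(m,n) ⊂ S be the set of tuples (ψ₁,...,ψ_{M+N}) such that the ψᵢ are mutually orthogonal, ‖ψᵢ‖² = mᵢ for i = 1,...,M, and ‖ψ_{M+j}‖² = n_{N+1-j} for j = 1,...,N. Then every ψ in J⁻¹(m,n) has all components ψᵢ nonzero, and the stabilizer of ψ in U(M,N) (acting by ψᵢ ↦ Σⱼ Uⱼᵢ ψⱼ) is trivial. -/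
open scoped Matrix

/-!
Mutually orthogonal vectors of positive norm are linearly independent, and a matrix fixing a
linearly independent family under `ψᵢ ↦ ∑ⱼ Uⱼᵢ ψⱼ` must be the identity.
-/

theorem Matrix.eq_one_of_sum_smul_eq_self {ι R M : Type*} [Fintype ι] [DecidableEq ι]
    [Semiring R] [AddCommMonoid M] [Module R M] {v : ι → M} (hv : LinearIndependent R v)
    {U : Matrix ι ι R} (hU : ∀ i, ∑ j, U j i • v j = v i) : U = 1 := by
  ext j i
  have hv_i : ∑ k, (1 : Matrix ι ι R) k i • v k = v i := by
    simp [Matrix.one_apply, ite_smul]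
  exact Fintype.linearIndependent_iffₛ.mp hv (fun k => U k i) (fun k => (1 : Matrix ι ι R) k i)
    ((hU i).trans hv_i.symm) j

theorem stmt10_general {H : Type*} [NormedAddCommGroup H] [InnerProductSpace ℂ H]
    (M N : ℕ)
    (m : Fin M → ℝ) (n : Fin N → ℝ)
    (hmpos : ∀ i, 0 < m i)
    (hnpos : ∀ j, 0 < n j)
    (ψ : Fin (M + N) → H)
    (horth : ∀ i j, i ≠ j → (inner ℂ (ψ i) (ψ j) : ℂ) = 0)
    (hmnorm : ∀ i : Fin M, ‖ψ (Fin.castAdd N i)‖ ^ 2 = m i)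
    (hnnorm : ∀ j : Fin N, ‖ψ (Fin.natAdd M j)‖ ^ 2 = n (Fin.rev j)) :
    (∀ i, ψ i ≠ 0) ∧
    ∀ U : Matrix (Fin (M + N)) (Fin (M + N)) ℂ,
      Uᴴ * Matrix.diagonal (fun i : Fin (M + N) => if (i : ℕ) < M then (1 : ℂ) else -1) * U =
        Matrix.diagonal (fun i : Fin (M + N) => if (i : ℕ) < M then (1 : ℂ) else -1) →
      (∀ i, ∑ j, U j i • ψ j = ψ i) → U = 1 := by
  have hnorm_pos : ∀ i, 0 < ‖ψ i‖ ^ 2 := Fin.addCases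
    (fun i => (hmnorm i).symm ▸ hmpos i) (fun j => (hnnorm j).symm ▸ hnpos _)
  have hne : ∀ i, ψ i ≠ 0 := fun i hi => by
    simpa [hi] using hnorm_pos i
  have hindep : LinearIndependent ℂ ψ := linearIndependent_of_ne_zero_of_inner_eq_zero hne horth
  exact ⟨hne, fun U _ hfix => Matrix.eq_one_of_sum_smul_eq_self hindep hfix⟩

/-- for the level set J⁻¹(m,n) ⊂ S = H^{M+N} (H infinite-dimensional),
consisting of tuples with mutually orthogonal components of prescribed norms
‖ψᵢ‖² = mᵢ (i ≤ M), ‖ψ_{M+j}‖² = n_{N+1-j}, every ψ ∈ J⁻¹(m,n) has all components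
nonzero, and its stabilizer in U(M,N) (acting by ψᵢ ↦ Σⱼ Uⱼᵢψⱼ) is trivial. -/
theorem stmt10 {H : Type*} [NormedAddCommGroup H] [InnerProductSpace ℂ H] [CompleteSpace H]
    (hinf : ¬ FiniteDimensional ℂ H) (M N : ℕ)
    (m : Fin M → ℝ) (n : Fin N → ℝ)
    (hm : ∀ i j : Fin M, i ≤ j → m j ≤ m i) (hmpos : ∀ i, 0 < m i)
    (hn : ∀ i j : Fin N, i ≤ j → n j ≤ n i) (hnpos : ∀ j, 0 < n j)
    (ψ : Fin (M + N) → H)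
    (horth : ∀ i j, i ≠ j → (inner ℂ (ψ i) (ψ j) : ℂ) = 0)
    (hmnorm : ∀ i : Fin M, ‖ψ (Fin.castAdd N i)‖ ^ 2 = m i)
    (hnnorm : ∀ j : Fin N, ‖ψ (Fin.natAdd M j)‖ ^ 2 = n (Fin.rev j)) :
    (∀ i, ψ i ≠ 0) ∧
    ∀ U : Matrix (Fin (M + N)) (Fin (M + N)) ℂ,
      Uᴴ * Matrix.diagonal (fun i : Fin (M + N) => if (i : ℕ) < M then (1 : ℂ) else -1) * U =
        Matrix.diagonal (fun i : Fin (M + N) => if (i : ℕ) < M then (1 : ℂ) else -1) →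
      (∀ i, ∑ j, U j i • ψ j = ψ i) → U = 1 :=
  stmt10_general M N m n hmpos hnpos ψ horth hmnorm hnnorm
end

section
/- With the level set J⁻¹(m,n) ⊂ S = H^{M+N} as above (components mutually orthogonal with prescribed nonzero norms), the action of U(M,N) on J⁻¹(m,n) is proper: if ψ⁽ⁿ⁾ → ψ in J⁻¹(m,n), U⁽ⁿ⁾ ∈ U(M,N), and U⁽ⁿ⁾ψ⁽ⁿ⁾ converges in J⁻¹(m,n), then (U⁽ⁿ⁾) has a convergent subsequence in U(M,N). -/
/-!
Orthogonality of the components of `ψ⁽ᵏ⁾` lets one read the entries of `U⁽ᵏ⁾` off the mixed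
tuple: `U⁽ᵏ⁾ j i = ⟪ψ⁽ᵏ⁾ j, (U⁽ᵏ⁾ψ⁽ᵏ⁾) i⟫ / ‖ψ⁽ᵏ⁾ j‖²`. The right-hand side converges because the
limit components `ψ j` are nonzero, so the whole sequence `U⁽ᵏ⁾` converges, and its limit lies
in `U(M,N)` because that group is closed.
-/

open scoped Matrix

open Filter Topology InnerProductSpace

section OrthogonalCoefficients

variable {α 𝕜 E ι : Type*} [RCLike 𝕜] [NormedAddCommGroup E] [InnerProductSpace 𝕜 E] [Fintype ι]

lemma inner_sum_smul_of_pairwise_inner_eq_zero {v : ι → E}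
    (hv : Pairwise fun i j => ⟪v i, v j⟫_𝕜 = 0) (c : ι → 𝕜) (j : ι) :
    ⟪v j, ∑ l, c l • v l⟫_𝕜 = c j * (‖v j‖ : 𝕜) ^ 2 := by
  rw [inner_sum, Finset.sum_eq_single j (fun l _ hl => by rw [inner_smul_right, hv hl.symm,
    mul_zero]) (by simp), inner_smul_right, inner_self_eq_norm_sq_to_K]

lemma tendsto_coeff_of_tendsto_sum_smul {κ : Type*} {l : Filter α} {v : α → ι → E}
    {v₀ : ι → E} {C : α → ι → κ → 𝕜} {w : κ → E}
    (hv : ∀ a, Pairwise fun i j => ⟪v a i, v a j⟫_𝕜 = 0) (hv₀ : ∀ j, v₀ j ≠ 0)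
    (hvl : Tendsto v l (𝓝 v₀)) (hw : Tendsto (fun a i => ∑ j, C a j i • v a j) l (𝓝 w)) :
    Tendsto C l (𝓝 fun j i => ⟪v₀ j, w i⟫_𝕜 / (‖v₀ j‖ : 𝕜) ^ 2) := by
  have hsq (x : E) (hx : x ≠ 0) : (‖x‖ : 𝕜) ^ 2 ≠ 0 := by simpa using hx
  refine tendsto_pi_nhds.2 fun j => tendsto_pi_nhds.2 fun i => ?_
  have hvj : Tendsto (fun a => v a j) l (𝓝 (v₀ j)) := (continuous_apply j).tendsto _ |>.comp hvl
  have hwi : Tendsto (fun a => ∑ j, C a j i • v a j) l (𝓝 (w i)) :=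
    (continuous_apply i).tendsto _ |>.comp hw
  have hquot := (hvj.inner hwi).div ((RCLike.continuous_ofReal.tendsto _).comp hvj.norm |>.pow 2)
    (hsq _ (hv₀ j))
  refine hquot.congr' ((hvj.eventually_ne (hv₀ j)).mono fun a ha => ?_)
  show ⟪v a j, ∑ l, C a l i • v a l⟫_𝕜 / (‖v a j‖ : 𝕜) ^ 2 = C a j i
  rw [inner_sum_smul_of_pairwise_inner_eq_zero (hv a), mul_div_cancel_right₀ _ (hsq _ ha)]

end OrthogonalCoefficients

lemma Matrix.isClosed_setOf_conjTranspose_mul_mul_eq {n 𝕜 : Type*} [Fintype n] [RCLike 𝕜]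
    (D : Matrix n n 𝕜) : IsClosed {U : Matrix n n 𝕜 | Uᴴ * D * U = D} :=
  isClosed_eq (by fun_prop) continuous_const

theorem stmt11_general {H : Type*} [NormedAddCommGroup H] [InnerProductSpace ℂ H]
    (M N : ℕ) (m : Fin M → ℝ) (n : Fin N → ℝ)
    (hmpos : ∀ i, 0 < m i) (hnpos : ∀ j, 0 < n j) :
    let D : Matrix (Fin (M + N)) (Fin (M + N)) ℂ :=
      Matrix.diagonal (fun i : Fin (M + N) => if (i : ℕ) < M then (1 : ℂ) else -1)
    let level : Set (Fin (M + N) → H) :=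
      {ψ | (∀ i j, i ≠ j → (inner ℂ (ψ i) (ψ j) : ℂ) = 0) ∧
        (∀ i : Fin M, ‖ψ (Fin.castAdd N i)‖ ^ 2 = m i) ∧
        (∀ j : Fin N, ‖ψ (Fin.natAdd M j)‖ ^ 2 = n (Fin.rev j))}
    ∀ (ψseq : ℕ → (Fin (M + N) → H)) (ψ χ : Fin (M + N) → H)
      (Useq : ℕ → Matrix (Fin (M + N)) (Fin (M + N)) ℂ),
      (∀ k, ψseq k ∈ level) → ψ ∈ level → χ ∈ level →
      Filter.Tendsto ψseq Filter.atTop (nhds ψ) →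
      (∀ k, (Useq k)ᴴ * D * Useq k = D) →
      Filter.Tendsto (fun k => fun i => ∑ j, (Useq k) j i • ψseq k j)
        Filter.atTop (nhds χ) →
      ∃ (φ : ℕ → ℕ) (U : Matrix (Fin (M + N)) (Fin (M + N)) ℂ),
        StrictMono φ ∧ Uᴴ * D * U = D ∧
        Filter.Tendsto (Useq ∘ φ) Filter.atTop (nhds U) := by
  intro D level ψseq ψ χ Useq hψseq hψ _ hψseq_lim hUseq hUψseq_lim
  have hψ_ne : ∀ j, ψ j ≠ 0 := Fin.addCases
    (fun i h => (hmpos i).ne' (by simpa [h] using (hψ.2.1 i).symm))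
    (fun j h => (hnpos j.rev).ne' (by simpa [h] using (hψ.2.2 j).symm))
  have hUseq_lim := tendsto_coeff_of_tendsto_sum_smul (C := Useq)
    (fun k i j hij => (hψseq k).1 i j hij) hψ_ne hψseq_lim hUψseq_lim
  exact ⟨id, _, strictMono_id,
    (Matrix.isClosed_setOf_conjTranspose_mul_mul_eq D).mem_of_tendsto hUseq_lim
      (Eventually.of_forall hUseq), hUseq_lim⟩

/-- the U(M,N)-action on the level set J⁻¹(m,n) ⊂ H^{M+N} (tuples
with mutually orthogonal components of prescribed nonzero norms) is proper: if
ψ⁽ᵏ⁾ → ψ in J⁻¹(m,n), U⁽ᵏ⁾ ∈ U(M,N) and U⁽ᵏ⁾ψ⁽ᵏ⁾ converges in J⁻¹(m,n), then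
(U⁽ᵏ⁾) has a subsequence converging in U(M,N). -/
theorem stmt11 {H : Type*} [NormedAddCommGroup H] [InnerProductSpace ℂ H] [CompleteSpace H]
    (M N : ℕ) (m : Fin M → ℝ) (n : Fin N → ℝ)
    (hmpos : ∀ i, 0 < m i) (hnpos : ∀ j, 0 < n j) :
    let D : Matrix (Fin (M + N)) (Fin (M + N)) ℂ :=
      Matrix.diagonal (fun i : Fin (M + N) => if (i : ℕ) < M then (1 : ℂ) else -1)
    let level : Set (Fin (M + N) → H) :=
      {ψ | (∀ i j, i ≠ j → (inner ℂ (ψ i) (ψ j) : ℂ) = 0) ∧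
        (∀ i : Fin M, ‖ψ (Fin.castAdd N i)‖ ^ 2 = m i) ∧
        (∀ j : Fin N, ‖ψ (Fin.natAdd M j)‖ ^ 2 = n (Fin.rev j))}
    ∀ (ψseq : ℕ → (Fin (M + N) → H)) (ψ χ : Fin (M + N) → H)
      (Useq : ℕ → Matrix (Fin (M + N)) (Fin (M + N)) ℂ),
      (∀ k, ψseq k ∈ level) → ψ ∈ level → χ ∈ level →
      Filter.Tendsto ψseq Filter.atTop (nhds ψ) →
      (∀ k, (Useq k)ᴴ * D * Useq k = D) →
      Filter.Tendsto (fun k => fun i => ∑ j, (Useq k) j i • ψseq k j)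
        Filter.atTop (nhds χ) →
      ∃ (φ : ℕ → ℕ) (U : Matrix (Fin (M + N)) (Fin (M + N)) ℂ),
        StrictMono φ ∧ Uᴴ * D * U = D ∧
        Filter.Tendsto (Useq ∘ φ) Filter.atTop (nhds U) :=
  stmt11_general M N m n hmpos hnpos
end
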